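/- arXiv:dg-ga/9709008 — 5 statements merged into one kernel-verified Lean document; each statement's English description precedes it below -/
import Mathlib

section
/- Let Γ be a subgroup of SU(2), and define C_Γ = {σ ∈ SL(2,ℂ) : σΓσ⁻¹ ⊆ SU(2)}. If Γ is non-abelian, then the image of C_Γ under the map σ ↦ σ*σ is exactly {I}; that is, σΓσ⁻¹ ⊆ SU(2) with Γ non-abelian implies σ*σ = I, i.e. σ ∈ SU(2). -/
open Matrix

lemma key (H A B : Matrix (Fin 2) (Fin 2) ℂ) (hA : A*H = H*A) (hB : B*H = H*B)
    (hAB : A*B ≠ B*A) : ∃ c : ℂ, H = c • 1 := by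
  have eA : ∀ i j, (A*H) i j = (H*A) i j := fun i j => by rw [hA]
  have eB : ∀ i j, (B*H) i j = (H*B) i j := fun i j => by rw [hB]
  simp only [Matrix.mul_apply, Fin.sum_univ_two] at eA eB
  have a1 := eA 0 0; have a2 := eA 0 1; have a3 := eA 1 0
  have b1 := eB 0 0; have b2 := eB 0 1; have b3 := eB 1 0
  by_cases hb : H 0 1 = 0
  · by_cases hc : H 1 0 = 0
    · by_cases had : H 0 0 = H 1 1
      · refine ⟨H 0 0, ?_⟩
        ext i j
        fin_cases i <;> fin_cases j <;>
          simp [hb, hc, ← had, Matrix.one_apply]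
      · exfalso; apply hAB
        have had' : H 0 0 - H 1 1 ≠ 0 := sub_ne_zero.mpr had
        have hA01 : A 0 1 = 0 := by
          have h : A 0 1 * (H 0 0 - H 1 1) = 0 := by
            linear_combination -a2 + (A 0 0 - A 1 1) * hb
          exact (mul_eq_zero.mp h).resolve_right had'
        have hB01 : B 0 1 = 0 := by
          have h : B 0 1 * (H 0 0 - H 1 1) = 0 := by
            linear_combination -b2 + (B 0 0 - B 1 1) * hb
          exact (mul_eq_zero.mp h).resolve_right had'
        have hA10 : A 1 0 = 0 := by
          have h : A 1 0 * (H 0 0 - H 1 1) = 0 := by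
            linear_combination a3 + (A 0 0 - A 1 1) * hc
          exact (mul_eq_zero.mp h).resolve_right had'
        have hB10 : B 1 0 = 0 := by
          have h : B 1 0 * (H 0 0 - H 1 1) = 0 := by
            linear_combination b3 + (B 0 0 - B 1 1) * hc
          exact (mul_eq_zero.mp h).resolve_right had'
        ext i j
        fin_cases i <;> fin_cases j <;>
          simp only [Matrix.mul_apply, Fin.sum_univ_two, Fin.isValue, Fin.mk_zero, Fin.mk_one]
        · linear_combination B 1 0 * hA01 - A 1 0 * hB01
        · linear_combination (A 0 0 - A 1 1) * hB01 + (B 1 1 - B 0 0) * hA01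
        · linear_combination (B 0 0 - B 1 1) * hA10 - (A 0 0 - A 1 1) * hB10
        · linear_combination A 1 0 * hB01 - B 1 0 * hA01
    · exfalso; apply hAB
      have hA01 : A 0 1 = 0 := by
        have h : A 0 1 * H 1 0 = 0 := by linear_combination a1 + A 1 0 * hb
        exact (mul_eq_zero.mp h).resolve_right hc
      have hB01 : B 0 1 = 0 := by
        have h : B 0 1 * H 1 0 = 0 := by linear_combination b1 + B 1 0 * hb
        exact (mul_eq_zero.mp h).resolve_right hc
      ext i j
      fin_cases i <;> fin_cases j <;>
        simp only [Matrix.mul_apply, Fin.sum_univ_two, Fin.isValue, Fin.mk_zero, Fin.mk_one]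
      · linear_combination B 1 0 * hA01 - A 1 0 * hB01
      · linear_combination (A 0 0 - A 1 1) * hB01 + (B 1 1 - B 0 0) * hA01
      · exact mul_left_cancel₀ hc (by linear_combination B 1 0 * a3 - A 1 0 * b3)
      · linear_combination A 1 0 * hB01 - B 1 0 * hA01
  · exfalso; apply hAB
    have h0 : A 0 1 * B 1 0 = B 0 1 * A 1 0 :=
      mul_left_cancel₀ hb (by linear_combination B 0 1 * a1 - A 0 1 * b1)
    ext i j
    fin_cases i <;> fin_cases j <;>
      simp only [Matrix.mul_apply, Fin.sum_univ_two, Fin.isValue, Fin.mk_zero, Fin.mk_one]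
    · linear_combination h0
    · exact mul_left_cancel₀ hb (by linear_combination B 0 1 * a2 - A 0 1 * b2)
    · exact mul_left_cancel₀ hb
        (by linear_combination A 1 0 * b2 - B 1 0 * a2 - (H 0 0 - H 1 1) * h0)
    · linear_combination -h0
open Matrix

lemma helper2 (M N g : Matrix (Fin 2) (Fin 2) ℂ) (hMN : M*N = 1) (hNM : N*M = 1)
    (h1 : (M*g*N)ᴴ * (M*g*N) = 1) (hg : g*gᴴ = 1) : g * (Mᴴ*M) = (Mᴴ*M) * g := by
  have e1 : Mᴴ * Nᴴ = 1 := by rw [← conjTranspose_mul, hNM, conjTranspose_one]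
  have h2 : gᴴ * (Mᴴ*M) * g = Mᴴ*M := by
    calc gᴴ * (Mᴴ*M) * g
        = (Mᴴ*Nᴴ) * (gᴴ * ((Mᴴ*M) * (g * (N*M)))) := by rw [e1, hNM]; noncomm_ring
      _ = Mᴴ * ((M*g*N)ᴴ * (M*g*N)) * M := by
          simp only [conjTranspose_mul]; noncomm_ring
      _ = Mᴴ * M := by rw [h1, mul_one]
  calc g*(Mᴴ*M) = g*(gᴴ*(Mᴴ*M)*g) := by rw [h2]
    _ = (g*gᴴ)*((Mᴴ*M)*g) := by noncomm_ring
    _ = (Mᴴ*M)*g := by rw [hg, one_mul]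

theorem stmt5 (Γ : Subgroup (Matrix.SpecialLinearGroup (Fin 2) ℂ))
    (hΓ : ∀ γ ∈ Γ, ((γ : Matrix.SpecialLinearGroup (Fin 2) ℂ) : Matrix (Fin 2) (Fin 2) ℂ)ᴴ *
      ((γ : Matrix.SpecialLinearGroup (Fin 2) ℂ) : Matrix (Fin 2) (Fin 2) ℂ) = 1)
    (hna : ∃ γ₁ ∈ Γ, ∃ γ₂ ∈ Γ, γ₁ * γ₂ ≠ γ₂ * γ₁)
    (σ : Matrix.SpecialLinearGroup (Fin 2) ℂ)
    (hσ : ∀ γ ∈ Γ,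
      ((σ * γ * σ⁻¹ : Matrix.SpecialLinearGroup (Fin 2) ℂ) : Matrix (Fin 2) (Fin 2) ℂ)ᴴ *
        ((σ * γ * σ⁻¹ : Matrix.SpecialLinearGroup (Fin 2) ℂ) : Matrix (Fin 2) (Fin 2) ℂ) = 1) :
    ((σ : Matrix (Fin 2) (Fin 2) ℂ))ᴴ * (σ : Matrix (Fin 2) (Fin 2) ℂ) = 1 := by
  set M : Matrix (Fin 2) (Fin 2) ℂ := (σ : Matrix (Fin 2) (Fin 2) ℂ) with hM
  set N : Matrix (Fin 2) (Fin 2) ℂ := ((σ⁻¹ : Matrix.SpecialLinearGroup (Fin 2) ℂ) :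
    Matrix (Fin 2) (Fin 2) ℂ) with hN
  have hMN : M * N = 1 := by
    rw [hM, hN, ← Matrix.SpecialLinearGroup.coe_mul, mul_inv_cancel,
      Matrix.SpecialLinearGroup.coe_one]
  have hNM : N * M = 1 := by
    rw [hM, hN, ← Matrix.SpecialLinearGroup.coe_mul, inv_mul_cancel,
      Matrix.SpecialLinearGroup.coe_one]
  have hcomm : ∀ γ ∈ Γ, ((γ : Matrix.SpecialLinearGroup (Fin 2) ℂ) :
      Matrix (Fin 2) (Fin 2) ℂ) * (Mᴴ * M) = (Mᴴ * M) *
      ((γ : Matrix.SpecialLinearGroup (Fin 2) ℂ) : Matrix (Fin 2) (Fin 2) ℂ) := by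
    intro γ hγ
    refine helper2 M N _ hMN hNM ?_ (mul_eq_one_comm.mp (hΓ γ hγ))
    have := hσ γ hγ
    simpa only [Matrix.SpecialLinearGroup.coe_mul] using this
  obtain ⟨γ₁, h₁, γ₂, h₂, hne⟩ := hna
  have hAB : ((γ₁ : Matrix.SpecialLinearGroup (Fin 2) ℂ) : Matrix (Fin 2) (Fin 2) ℂ) *
      ((γ₂ : Matrix.SpecialLinearGroup (Fin 2) ℂ) : Matrix (Fin 2) (Fin 2) ℂ) ≠
      ((γ₂ : Matrix.SpecialLinearGroup (Fin 2) ℂ) : Matrix (Fin 2) (Fin 2) ℂ) *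
      ((γ₁ : Matrix.SpecialLinearGroup (Fin 2) ℂ) : Matrix (Fin 2) (Fin 2) ℂ) := by
    intro h
    apply hne
    apply Subtype.coe_injective
    simpa only [Matrix.SpecialLinearGroup.coe_mul] using h
  obtain ⟨c, hc⟩ := key (Mᴴ * M) _ _ ((hcomm γ₁ h₁).symm ▸ (hcomm γ₁ h₁))
    ((hcomm γ₂ h₂).symm ▸ (hcomm γ₂ h₂)) hAB
  have hdet : (Mᴴ * M).det = 1 := by
    rw [Matrix.det_mul, Matrix.det_conjTranspose, σ.prop]
    simp
  have hc2 : c ^ 2 = 1 := by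
    rw [hc] at hdet
    simpa [Matrix.det_smul] using hdet
  have h00 : (Mᴴ * M) 0 0 = c := by
    rw [hc]; simp
  have hre : 0 ≤ c.re := by
    rw [← h00]
    simp only [Matrix.mul_apply, Matrix.conjTranspose_apply, Fin.sum_univ_two,
      Complex.add_re, Complex.mul_re, Complex.conj_re, Complex.conj_im, RCLike.star_def]
    nlinarith [sq_nonneg (M 0 0).re, sq_nonneg (M 0 0).im, sq_nonneg (M 1 0).re,
      sq_nonneg (M 1 0).im]
  have hc1 : c = 1 := by
    have h : (c - 1) * (c + 1) = 0 := by linear_combination hc2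
    rcases mul_eq_zero.mp h with h | h
    · exact sub_eq_zero.mp h
    · exfalso
      have : c = -1 := eq_neg_of_add_eq_zero_left h
      rw [this] at hre
      norm_num at hre
  rw [hc, hc1, one_smul]
end

section
/- Let T, T' ∈ 𝔰𝔲(2) be nonzero with exp(T)·exp(T') ≠ exp(T')·exp(T). Then exp(iℝT) ∩ exp(iℝT') = {I}. -/
/-!
Let `x = exp (i s T) = exp (i t T')`. If `x` is not scalar, its centralizer in `M₂(ℂ)` is
`span {1, x}`, which is commutative; both `T` and `T'` commute with `x`, hence with each other,
and then so do `exp T` and `exp T'`. If `x` is scalar, then `i s T` is a traceless Hermitian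
matrix with scalar exponential; taking the logarithm shows it is a real scalar, hence `0`.
-/

open Matrix

namespace Matrix

theorem exists_eq_smul_one_add_smul_of_commute {K : Type*} [Field K]
    {M X : Matrix (Fin 2) (Fin 2) K} (hM : ∀ c : K, M ≠ c • 1) (hX : Commute X M) :
    ∃ α β : K, X = α • 1 + β • M := by
  -- `X` commutes with `M` iff these two vectors are parallel.
  set u : Fin 3 → K := ![M 0 1, M 1 0, M 0 0 - M 1 1]
  set w : Fin 3 → K := ![X 0 1, X 1 0, X 0 0 - X 1 1]
  have hu : u ≠ 0 := by
    intro h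
    have h0 : M 0 1 = 0 := congrFun h 0
    have h1 : M 1 0 = 0 := congrFun h 1
    have h2 : M 0 0 - M 1 1 = 0 := congrFun h 2
    refine hM (M 0 0) (ext fun i j ↦ ?_)
    fin_cases i <;> fin_cases j <;> simp [h0, h1, sub_eq_zero.mp h2]
  have hcross : u ⨯₃ w = 0 := by
    have hXM (i j : Fin 2) := congrFun (congrFun hX.eq i) j
    simp only [mul_apply, Fin.sum_univ_two] at hXM
    ext i
    fin_cases i
    · show M 1 0 * (X 0 0 - X 1 1) - (M 0 0 - M 1 1) * X 1 0 = 0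
      linear_combination -hXM 1 0
    · show (M 0 0 - M 1 1) * X 0 1 - M 0 1 * (X 0 0 - X 1 1) = 0
      linear_combination -hXM 0 1
    · show M 0 1 * X 1 0 - M 1 0 * X 0 1 = 0
      linear_combination -hXM 0 0
  obtain ⟨β, hβ⟩ : ∃ β : K, β • u = w := by
    by_contra! h
    exact crossProduct_ne_zero_iff_linearIndependent.mpr
      ((LinearIndependent.pair_iff' hu).mpr h) hcross
  have h0 : β * M 0 1 = X 0 1 := congrFun hβ 0
  have h1 : β * M 1 0 = X 1 0 := congrFun hβ 1
  have h2 : β * (M 0 0 - M 1 1) = X 0 0 - X 1 1 := congrFun hβ 2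
  refine ⟨X 0 0 - β * M 0 0, β, ext fun i j ↦ ?_⟩
  fin_cases i <;> fin_cases j <;>
    simp only [Fin.zero_eta, Fin.mk_one, add_apply, smul_apply, smul_eq_mul, one_apply_eq,
      one_apply_ne zero_ne_one, one_apply_ne one_ne_zero, mul_one, mul_zero, zero_add]
  · ring
  · linear_combination h0.symm
  · linear_combination h1.symm
  · linear_combination h2

theorem commute_of_commute_of_forall_ne_smul_one {K : Type*} [Field K]
    {M X Y : Matrix (Fin 2) (Fin 2) K} (hM : ∀ c : K, M ≠ c • 1) (hX : Commute X M)
    (hY : Commute Y M) : Commute X Y := by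
  obtain ⟨α, β, rfl⟩ := exists_eq_smul_one_add_smul_of_commute hM hX
  exact ((Commute.one_left Y).smul_left α).add_left (hY.symm.smul_left β)

variable {n : Type*} [Fintype n] [DecidableEq n] [Nonempty n] {A : Matrix n n ℂ}

theorem IsHermitian.exists_eq_real_smul_one_of_exp_eq_smul_one (hA : A.IsHermitian) {c : ℂ}
    (hc : NormedSpace.exp A = c • 1) : ∃ r : ℝ, A = r • 1 := by
  obtain ⟨r, rfl⟩ : ∃ r : ℝ, c = r := by
    have h := hA.exp
    rw [hc, IsHermitian, conjTranspose_smul, conjTranspose_one] at h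
    have i := Classical.arbitrary n
    exact Complex.conj_eq_iff_real.mp (by simpa using congrFun (congrFun h i) i)
  refine ⟨Real.log r, ?_⟩
  -- `CFC.log` needs a C⋆-norm on matrices; `exp` only sees the (norm-independent) topology.
  open scoped Matrix.Norms.L2Operator in
  rw [← CFC.log_exp A hA, hc, Complex.coe_smul, ← Algebra.algebraMap_eq_smul_one,
    CFC.log_algebraMap, Algebra.algebraMap_eq_smul_one]

theorem IsHermitian.exp_eq_one_of_trace_eq_zero_of_exp_eq_smul_one (hA : A.IsHermitian)
    (htr : A.trace = 0) {c : ℂ} (hc : NormedSpace.exp A = c • 1) : NormedSpace.exp A = 1 := by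
  obtain ⟨r, rfl⟩ := hA.exists_eq_real_smul_one_of_exp_eq_smul_one hc
  have hr : r = 0 := by simpa [trace_smul] using htr
  simp [hr]

end Matrix

theorem stmt8_general (T T' : Matrix (Fin 2) (Fin 2) ℂ)
    (hT : Tᴴ = -T) (hTtr : T.trace = 0)
    (hnc : NormedSpace.exp T * NormedSpace.exp T'
        ≠ NormedSpace.exp T' * NormedSpace.exp T) :
    (Set.range fun t : ℝ => NormedSpace.exp (((t : ℂ) * Complex.I) • T)) ∩
      (Set.range fun t : ℝ => NormedSpace.exp (((t : ℂ) * Complex.I) • T')) = {1} := by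
  refine Set.Subset.antisymm ?_ fun x hx ↦ hx ▸ ⟨⟨0, by simp⟩, ⟨0, by simp⟩⟩
  rintro x ⟨⟨s, rfl⟩, ⟨t, ht⟩⟩
  dsimp only at ht
  by_cases hx : ∃ c : ℂ, NormedSpace.exp (((s : ℂ) * Complex.I) • T) = c • 1
  · obtain ⟨c, hc⟩ := hx
    have hA : (((s : ℂ) * Complex.I) • T).IsHermitian := by
      simp [IsHermitian, conjTranspose_smul, hT]
    exact hA.exp_eq_one_of_trace_eq_zero_of_exp_eq_smul_one (by simp [trace_smul, hTtr]) hc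
  · push Not at hx
    have hTx := ((Commute.refl T).smul_right ((s : ℂ) * Complex.I)).exp_right
    have hT'x := ht ▸ ((Commute.refl T').smul_right ((t : ℂ) * Complex.I)).exp_right
    exact absurd (commute_of_commute_of_forall_ne_smul_one hx hTx hT'x).exp.eq hnc

theorem stmt8 (T T' : Matrix (Fin 2) (Fin 2) ℂ)
    (hT : Tᴴ = -T) (hTtr : T.trace = 0) (hT0 : T ≠ 0)
    (hT' : T'ᴴ = -T') (hT'tr : T'.trace = 0) (hT'0 : T' ≠ 0)
    (hnc : NormedSpace.exp T * NormedSpace.exp T'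
        ≠ NormedSpace.exp T' * NormedSpace.exp T) :
    (Set.range fun t : ℝ => NormedSpace.exp (((t : ℂ) * Complex.I) • T)) ∩
      (Set.range fun t : ℝ => NormedSpace.exp (((t : ℂ) * Complex.I) • T')) = {1} :=
  stmt8_general T T' hT hTtr hnc
end

section
/- Let σ₂ = diag(e^{πi/n}, e^{−πi/n}) with n ≥ 2, and let σ₃ ∈ SU(2) satisfy σ₃ · conj(σ₃) = I and (σ₂ · conj(σ₃))² = −I. Then σ₃ = i·[[α e^{πi/n}, β],[β, −α e^{−πi/n}]] for some real α, β with α² + β² = 1. -/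
/-!
Unitarity with determinant one forces `σ₃ = !![a, b; -conj b, conj a]` with `|a|² + |b|² = 1`.
The `(0,0)` entry of `σ₃ · conj σ₃ = 1` reads `|a|² - b² = 1`, so `b (conj b + b) = 0` and `b` is
purely imaginary. The matrix `M = σ₂ · conj σ₃` has determinant one, so by Cayley–Hamilton
`M² = tr M • M - 1`; hence `M² = -1` forces `tr M = ω conj a + conj ω a = 0`, i.e. `conj ω · a` is
purely imaginary as well. Writing `b = iβ` and `a = iαω` gives the claimed form.
-/

open Matrix Complex ComplexConjugate

namespace Matrix

variable {R : Type*} [CommRing R]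

theorem sq_eq_trace_smul_sub_det_smul_fin_two (M : Matrix (Fin 2) (Fin 2) R) :
    M ^ 2 = M.trace • M - M.det • 1 := by
  ext i j
  fin_cases i <;> fin_cases j <;>
    simp [sq, mul_apply, trace_fin_two, det_fin_two] <;> ring

theorem trace_eq_zero_of_sq_eq_neg_one {M : Matrix (Fin 2) (Fin 2) R} (hdet : M.det = 1)
    (hsq : M ^ 2 = -1) : M.trace = 0 := by
  have hsmul : M.trace • M = 0 := by
    have h := M.sq_eq_trace_smul_sub_det_smul_fin_two
    rwa [hsq, hdet, one_smul, eq_comm, sub_eq_neg_self] at h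
  have : M.trace • (1 : Matrix (Fin 2) (Fin 2) R) = 0 := by
    calc M.trace • (1 : Matrix (Fin 2) (Fin 2) R) = M.trace • (M * M.adjugate) := by
          rw [mul_adjugate, hdet, one_smul]
      _ = 0 := by rw [← smul_mul_assoc, hsmul, zero_mul]
  simpa using congr_fun₂ this 0 0

theorem conjTranspose_eq_adjugate [StarRing R] {n : Type*} [Fintype n] [DecidableEq n]
    {U : Matrix n n R} (hu : Uᴴ * U = 1) (hdet : U.det = 1) : Uᴴ = U.adjugate :=
  left_inv_eq_left_inv hu (by rw [adjugate_mul, hdet, one_smul])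

theorem eq_of_conjTranspose_mul_self_eq_one_of_det_eq_one [StarRing R]
    {U : Matrix (Fin 2) (Fin 2) R} (hu : Uᴴ * U = 1) (hdet : U.det = 1) :
    U = !![U 0 0, U 0 1; -star (U 0 1), star (U 0 0)] := by
  have h := conjTranspose_eq_adjugate hu hdet
  rw [adjugate_fin_two] at h
  have h00 : star (U 0 0) = U 1 1 := by simpa using congr_fun₂ h 0 0
  have h10 : star (U 0 1) = -U 1 0 := by simpa using congr_fun₂ h 1 0
  ext i j
  fin_cases i <;> fin_cases j <;> simp [h00, h10]

end Matrix

theorem Complex.exists_eq_ofReal_mul_I_of_conj_add_eq_zero {z : ℂ} (hz : conj z + z = 0) :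
    ∃ x : ℝ, z = x * I := by
  have hre : z.re = 0 := by
    have := congr_arg re hz
    simp only [add_re, conj_re, zero_re] at this
    linarith
  exact ⟨z.im, Complex.ext (by simp [hre]) (by simp)⟩

theorem exists_real_eq_I_smul_of_mul_map_conj_eq_one {ω : ℂ} (hω : conj ω * ω = 1)
    {U : Matrix (Fin 2) (Fin 2) ℂ} (hu : Uᴴ * U = 1) (hdet : U.det = 1)
    (hc : U * U.map conj = 1) (h : (!![ω, 0; 0, conj ω] * U.map conj) ^ 2 = -1) :
    ∃ α β : ℝ, α ^ 2 + β ^ 2 = 1 ∧ U = I • !![α * ω, β; β, -(α * conj ω)] := by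
  have hdetM : (!![ω, 0; 0, conj ω] * U.map conj).det = 1 := by
    rw [det_mul, det_fin_two_of, ← RingHom.mapMatrix_apply, ← RingHom.map_det, hdet, map_one,
      mul_one, mul_zero, sub_zero, mul_comm, hω]
  have htr := trace_eq_zero_of_sq_eq_neg_one hdetM h
  obtain ⟨a, b, rfl⟩ : ∃ a b : ℂ, U = !![a, b; -conj b, conj a] :=
    ⟨_, _, eq_of_conjTranspose_mul_self_eq_one_of_det_eq_one hu hdet⟩
  have hconjU : (!![a, b; -conj b, conj a]).map conj = !![conj a, conj b; -b, a] := by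
    ext i j
    fin_cases i <;> fin_cases j <;> simp
  rw [hconjU, mul_fin_two] at hc htr
  rw [trace_fin_two_of] at htr
  have hnorm : a * conj a + b * conj b = 1 := by
    rw [det_fin_two_of] at hdet
    linear_combination hdet
  obtain ⟨β, rfl⟩ : ∃ β : ℝ, b = β * I := by
    have hcc : a * conj a - b * b = 1 := by
      have := congr_fun₂ hc 0 0
      simp only [of_apply, cons_val', cons_val_zero, empty_val', cons_val_fin_one,
        one_apply_eq] at this
      linear_combination this
    rcases mul_eq_zero.mp (by linear_combination hnorm - hcc : b * (conj b + b) = 0) with h0 | h0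
    · exact ⟨0, by simp [h0]⟩
    · exact exists_eq_ofReal_mul_I_of_conj_add_eq_zero h0
  obtain ⟨α, hα⟩ : ∃ α : ℝ, conj ω * a = α * I := by
    apply exists_eq_ofReal_mul_I_of_conj_add_eq_zero
    rw [map_mul, conj_conj]
    linear_combination htr
  obtain rfl : a = α * I * ω := by linear_combination ω * hα - a * hω
  refine ⟨α, β, ?_, ?_⟩
  · simp only [map_mul, conj_ofReal, conj_I] at hnorm
    have : ((α ^ 2 + β ^ 2 : ℝ) : ℂ) = 1 := by
      push_cast
      linear_combination hnorm + (α ^ 2 * ω * conj ω + β ^ 2) * I_sq - α ^ 2 * hω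
    exact_mod_cast this
  · ext i j
    fin_cases i <;> fin_cases j <;> simp <;> ring

theorem stmt13_general (n : ℕ)
    (σ₂ σ₃ : Matrix (Fin 2) (Fin 2) ℂ)
    (hσ₂ : σ₂ = !![Complex.exp ((Real.pi : ℂ) * Complex.I / n), 0;
        0, Complex.exp (-((Real.pi : ℂ) * Complex.I / n))])
    (hdet : σ₃.det = 1) (hu : σ₃ᴴ * σ₃ = 1)
    (hc : σ₃ * σ₃.map (starRingEnd ℂ) = 1)
    (h : (σ₂ * σ₃.map (starRingEnd ℂ)) ^ 2 = -1) :
    ∃ α β : ℝ, α ^ 2 + β ^ 2 = 1 ∧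
      σ₃ = Complex.I • !![(α : ℂ) * Complex.exp ((Real.pi : ℂ) * Complex.I / n), (β : ℂ);
        (β : ℂ), -((α : ℂ) * Complex.exp (-((Real.pi : ℂ) * Complex.I / n)))] := by
  have hconj : conj (exp (Real.pi * I / n)) = exp (-(Real.pi * I / n)) := by
    rw [← Complex.exp_conj, map_div₀, map_mul, conj_ofReal, conj_I, map_natCast, mul_neg,
      neg_div]
  rw [← hconj] at hσ₂ ⊢
  subst hσ₂
  refine exists_real_eq_I_smul_of_mul_map_conj_eq_one ?_ hu hdet hc h
  rw [hconj, ← exp_add, neg_add_cancel, exp_zero]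

theorem stmt13 (n : ℕ) (hn : 2 ≤ n)
    (σ₂ σ₃ : Matrix (Fin 2) (Fin 2) ℂ)
    (hσ₂ : σ₂ = !![Complex.exp ((Real.pi : ℂ) * Complex.I / n), 0;
        0, Complex.exp (-((Real.pi : ℂ) * Complex.I / n))])
    (hdet : σ₃.det = 1) (hu : σ₃ᴴ * σ₃ = 1)
    (hc : σ₃ * σ₃.map (starRingEnd ℂ) = 1)
    (h : (σ₂ * σ₃.map (starRingEnd ℂ)) ^ 2 = -1) :
    ∃ α β : ℝ, α ^ 2 + β ^ 2 = 1 ∧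
      σ₃ = Complex.I • !![(α : ℂ) * Complex.exp ((Real.pi : ℂ) * Complex.I / n), (β : ℂ);
        (β : ℂ), -((α : ℂ) * Complex.exp (-((Real.pi : ℂ) * Complex.I / n)))] :=
  stmt13_general n σ₂ σ₃ hσ₂ hdet hu hc h
end

section
/- Let n ≥ 3 be an integer and c a real number with 0 ≠ c and either −(n+1)/n² < c < 0 or 0 < c < (n−1)/n². Set λ = √(1−4c). Then cos(πλ) + 1 < 2 sin²(π/n). -/
theorem stmt16 (n : ℕ) (hn : 3 ≤ n) (c : ℝ) (hc0 : c ≠ 0)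
    (hc : (-((n + 1) / (n ^ 2 : ℝ)) < c ∧ c < 0) ∨
      (0 < c ∧ c < ((n : ℝ) - 1) / (n ^ 2 : ℝ)))
    (lam : ℝ) (hlam : lam = Real.sqrt (1 - 4 * c)) :
    Real.cos (Real.pi * lam) + 1 < 2 * Real.sin (Real.pi / n) ^ 2 := by
  have hN3 : (3:ℝ) ≤ (n:ℝ) := by exact_mod_cast hn
  set N : ℝ := (n:ℝ) with hNdef
  have hNpos : 0 < N := by linarith
  have hN2 : (0:ℝ) < N^2 := by positivity
  have hπ := Real.pi_pos
  have hub : lam < 1 + 2/N := by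
    rw [hlam, show (1:ℝ)+2/N = (N+2)/N by field_simp]
    rw [Real.sqrt_lt' (by positivity), div_pow, lt_div_iff₀ hN2]
    rcases hc with ⟨h1, h2⟩ | ⟨h1, h2⟩
    · have h1' : -(N+1)/N^2 < c := by rwa [neg_div]
      have := (div_lt_iff₀ hN2).mp h1'
      nlinarith
    · nlinarith
  have hlb : 1 - 2/N < lam := by
    rw [hlam, show (1:ℝ)-2/N = (N-2)/N by field_simp]
    rw [show ((N-2)/N < Real.sqrt (1-4*c)) ↔ (((N-2)/N)^2 < 1-4*c) from
      Real.lt_sqrt (div_nonneg (by linarith) hNpos.le), div_pow, div_lt_iff₀ hN2]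
    rcases hc with ⟨h1, h2⟩ | ⟨h1, h2⟩
    · nlinarith
    · have := (lt_div_iff₀ hN2).mp h2
      nlinarith
  have h2N : 2/N ≤ 2/3 := by rw [div_le_div_iff₀ hNpos (by norm_num : (0:ℝ) < 3)]; linarith
  have h2Npos : (0:ℝ) < 2/N := by positivity
  have hs : Real.pi/N = Real.pi*(2/N)/2 := by ring
  have ha1 : Real.pi/2 - Real.pi/N < Real.pi * lam / 2 := by
    rw [hs]; nlinarith
  have ha2 : Real.pi * lam / 2 < Real.pi/2 + Real.pi/N := by
    rw [hs]; nlinarith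
  have hcos1 : Real.cos (Real.pi*lam/2) < Real.sin (Real.pi/N) := by
    have h := Real.cos_lt_cos_of_nonneg_of_le_pi
      (x := Real.pi/2 - Real.pi/N) (y := Real.pi*lam/2)
      (by rw [hs]; nlinarith) (by nlinarith) ha1
    rwa [Real.cos_pi_div_two_sub] at h
  have hcos2 : -Real.sin (Real.pi/N) < Real.cos (Real.pi*lam/2) := by
    have h := Real.cos_lt_cos_of_nonneg_of_le_pi
      (x := Real.pi*lam/2) (y := Real.pi/2 + Real.pi/N)
      (by nlinarith) (by rw [hs]; nlinarith) ha2
    have h2 : Real.cos (Real.pi/2 + Real.pi/N) = -Real.sin (Real.pi/N) := by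
      rw [Real.cos_add]; simp
    rw [h2] at h; linarith
  have hsq : Real.cos (Real.pi*lam/2)^2 < Real.sin (Real.pi/N)^2 := sq_lt_sq' hcos2 hcos1
  have hdouble : Real.cos (Real.pi*lam) = 2*Real.cos (Real.pi*lam/2)^2 - 1 := by
    have h := Real.cos_sq (Real.pi*lam/2)
    rw [show 2*(Real.pi*lam/2) = Real.pi*lam by ring] at h
    linarith
  linarith
end

section
/- Let m ≥ 2, n ≥ 3 be integers with 1/2 < 1/m + 1/n, and let c be real with −((2 − m/2 + m/n)² − 1)/4 < c < (1 − (m/2 − m/n)²)/4 and c ≠ 0. Set λ = √(1−4c) and suppose θ ∈ (0,π) satisfies cos(πλ) = cos(mθ) with mθ confined to (πm(1/2 − 1/n), 2π − πm(1/2 − 1/n)). Then |cos θ| < sin(π/n); i.e. writing cos θ = α sin(π/n), we get |α| < 1. -/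
theorem stmt18 (m n : ℕ) (hm : 2 ≤ m) (hn : 3 ≤ n)
    (hmn : 1 / 2 < 1 / (m : ℝ) + 1 / (n : ℝ))
    (c : ℝ) (hc0 : c ≠ 0)
    (hcl : -(((2 - (m : ℝ) / 2 + (m : ℝ) / n) ^ 2 - 1) / 4) < c)
    (hcr : c < (1 - ((m : ℝ) / 2 - (m : ℝ) / n) ^ 2) / 4)
    (lam : ℝ) (hlam : lam = Real.sqrt (1 - 4 * c))
    (θ : ℝ) (hθ0 : 0 < θ) (hθπ : θ < Real.pi)
    (hcos : Real.cos (Real.pi * lam) = Real.cos (m * θ))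
    (h1 : Real.pi * m * (1 / 2 - 1 / (n : ℝ)) < m * θ)
    (h2 : (m : ℝ) * θ < 2 * Real.pi - Real.pi * m * (1 / 2 - 1 / (n : ℝ))) :
    |Real.cos θ| < Real.sin (Real.pi / n) := by
  have hπ := Real.pi_pos
  set s : ℝ := 1 / 2 - 1 / (n : ℝ) with hs
  have hn' : (3 : ℝ) ≤ (n : ℝ) := by exact_mod_cast hn
  have hnpos : (0 : ℝ) < n := by linarith
  have hs0 : 0 < s := by
    have : 1 / (n : ℝ) ≤ 1 / 3 := by
      apply div_le_div_of_nonneg_left <;> linarith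
    simp only [hs]; linarith
  have hs2 : s < 1 / 2 := by
    have : 0 < 1 / (n : ℝ) := by positivity
    simp only [hs]; linarith
  have hm' : (2 : ℝ) ≤ (m : ℝ) := by exact_mod_cast hm
  have hmpos : (0 : ℝ) < m := by linarith
  -- θ > π s
  have hθl : Real.pi * s < θ := by
    have := h1
    rw [show Real.pi * m * s = m * (Real.pi * s) by ring] at this
    exact lt_of_mul_lt_mul_left this (le_of_lt hmpos)
  -- θ < π - π s
  have hθr : θ < Real.pi - Real.pi * s := by
    have h2' : (m : ℝ) * θ < m * (Real.pi - Real.pi * s) := by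
      have : 2 * Real.pi ≤ m * Real.pi := by nlinarith
      have hps : 0 < Real.pi * s := by positivity
      calc (m : ℝ) * θ < 2 * Real.pi - Real.pi * m * s := h2
        _ ≤ m * Real.pi - m * (Real.pi * s) := by nlinarith
        _ = m * (Real.pi - Real.pi * s) := by ring
    exact lt_of_mul_lt_mul_left h2' (le_of_lt hmpos)
  -- sin(π/n) = cos(π s)
  have hsin : Real.sin (Real.pi / n) = Real.cos (Real.pi * s) := by
    rw [show Real.pi * s = Real.pi / 2 - Real.pi / n by rw [hs]; ring,
      Real.cos_pi_div_two_sub]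
  rw [hsin, abs_lt]
  constructor
  · have : Real.cos (Real.pi - Real.pi * s) < Real.cos θ := by
      apply Real.cos_lt_cos_of_nonneg_of_le_pi (le_of_lt hθ0) (by nlinarith) hθr
    rw [Real.cos_pi_sub] at this
    linarith
  · exact Real.cos_lt_cos_of_nonneg_of_le_pi (by positivity) (le_of_lt hθπ) hθl
end
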